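/- arXiv:2204.05480 — 8 statements merged into one kernel-verified Lean document; each statement's English description precedes it below -/
import Mathlib

section
/- The function φ(x) = cosh(x)/sinh(x) − 1/x defined on (0,∞) is strictly increasing. -/
/-! φ has derivative 1/x² − 1/sinh² x, which is positive because |sinh x| > |x| for x ≠ 0. -/

open Real Set

theorem Real.hasDerivAt_cosh_div_sinh {x : ℝ} (hx : x ≠ 0) :
    HasDerivAt (fun x => cosh x / sinh x) (-1 / sinh x ^ 2) x :=
  ((hasDerivAt_cosh x).div (hasDerivAt_sinh x) (sinh_ne_zero.mpr hx)).congr_deriv <| by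
    linear_combination (-1 / sinh x ^ 2) * cosh_sq_sub_sinh_sq x

theorem Real.sq_lt_sinh_sq {x : ℝ} (hx : x ≠ 0) : x ^ 2 < sinh x ^ 2 := by
  rw [sq_lt_sq, abs_sinh]
  exact self_lt_sinh_iff.mpr (abs_pos.mpr hx)

theorem Real.hasDerivAt_cosh_div_sinh_sub_one_div {x : ℝ} (hx : x ≠ 0) :
    HasDerivAt (fun x => cosh x / sinh x - 1 / x) (1 / x ^ 2 - 1 / sinh x ^ 2) x := by
  simp only [one_div]
  exact ((hasDerivAt_cosh_div_sinh hx).sub (hasDerivAt_inv hx)).congr_deriv (by ring)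

theorem Real.one_div_sinh_sq_lt_one_div_sq {x : ℝ} (hx : x ≠ 0) : 1 / sinh x ^ 2 < 1 / x ^ 2 :=
  one_div_lt_one_div_of_lt (by positivity) (sq_lt_sinh_sq hx)

/-- The function φ(x) = cosh(x)/sinh(x) − 1/x is strictly increasing on (0, ∞). -/
theorem phi_strictMonoOn :
    StrictMonoOn (fun x : ℝ => Real.cosh x / Real.sinh x - 1 / x) (Set.Ioi (0 : ℝ)) := by
  have hderiv (x : ℝ) (hx : x ∈ Ioi 0) := hasDerivAt_cosh_div_sinh_sub_one_div (ne_of_gt hx)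
  refine strictMonoOn_of_deriv_pos (convex_Ioi 0)
    (fun x hx => (hderiv x hx).continuousAt.continuousWithinAt) fun x hx => ?_
  rw [interior_Ioi] at hx
  rw [(hderiv x hx).deriv]
  exact sub_pos.mpr (one_div_sinh_sq_lt_one_div_sq (ne_of_gt hx))
end

section
/- The function φ(x) = cosh(x)/sinh(x) − 1/x is strictly concave on (0,∞), i.e., φ''(x) < 0 for all x > 0. -/
/-!
Differentiating twice, `φ''(x) = 2 cosh x / sinh³ x - 2 / x³`, so `φ'' < 0` on `(0, ∞)` amounts
to `x³ cosh x < sinh³ x`. Since `4 sinh³ x = sinh 3x - 3 sinh x`, both sides are power series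
in `x`: the coefficient of `x^(2n+3)` is `4 / (2n)!` on the left and `(3^(2n+3) - 3) / (2n+3)!`
on the right, and `4 (2n+1)(2n+2)(2n+3) ≤ 3^(2n+3) - 3`, strictly from `n = 2` on.
-/

open Real Nat Filter Topology

theorem four_mul_prod_add_three_le_three_pow (n : ℕ) :
    4 * ((2 * n + 1) * (2 * n + 2) * (2 * n + 3)) + 3 ≤ 3 ^ (2 * n + 3) := by
  induction n with
  | zero => norm_num
  | succ n ih =>
    rw [show 2 * (n + 1) + 3 = 2 * n + 3 + 2 by ring, pow_add]
    generalize 3 ^ (2 * n + 3) = a at *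
    nlinarith [Nat.zero_le (n ^ 3), Nat.zero_le (n ^ 2)]

theorem cosh_term_le_sinh_three_mul_term {x : ℝ} (hx : 0 ≤ x) (n : ℕ) :
    4 * x ^ 3 * (x ^ (2 * n) / (2 * n)!) ≤
      (3 * x) ^ (2 * (n + 1) + 1) / (2 * (n + 1) + 1)! -
        3 * (x ^ (2 * (n + 1) + 1) / (2 * (n + 1) + 1)!) := by
  have hfac : ((2 * (n + 1) + 1)! : ℝ) = (2 * n + 1) * (2 * n + 2) * (2 * n + 3) * (2 * n)! := by
    rw [show 2 * (n + 1) + 1 = 2 * n + 3 by ring]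
    push_cast [Nat.factorial_succ]
    ring
  have hcoeff : (4 * ((2 * n + 1) * (2 * n + 2) * (2 * n + 3)) + 3 : ℝ) ≤ 3 ^ (2 * n + 3) := by
    exact_mod_cast four_mul_prod_add_three_le_three_pow n
  have hpow : 0 ≤ x ^ (2 * n) * x ^ 3 := by positivity
  have hfac_pos : (0 : ℝ) < (2 * n)! := by positivity
  rw [hfac, mul_pow, show 2 * (n + 1) + 1 = 2 * n + 3 by ring, ← sub_nonneg]
  field_simp
  linear_combination mul_nonneg hpow (sub_nonneg.2 hcoeff)

theorem pow_three_mul_cosh_lt_sinh_pow_three {x : ℝ} (hx : 0 < x) :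
    x ^ 3 * cosh x < sinh x ^ 3 := by
  have hsinh : HasSum (fun n ↦ (3 * x) ^ (2 * n + 1) / (2 * n + 1)! -
      3 * (x ^ (2 * n + 1) / (2 * n + 1)!)) (4 * sinh x ^ 3) := by
    have := (hasSum_sinh (3 * x)).sub ((hasSum_sinh x).mul_left 3)
    rwa [sinh_three_mul, add_sub_cancel_right] at this
  have hsinh_shift := (hasSum_nat_add_iff' 1).2 hsinh
  norm_num at hsinh_shift
  have hcosh := (hasSum_cosh x).mul_left (4 * x ^ 3)
  have hterm_lt : 4 * x ^ 3 * (x ^ (2 * 2) / (2 * 2)!) <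
      (3 * x) ^ (2 * 3 + 1) / (2 * 3 + 1)! - 3 * (x ^ (2 * 3 + 1) / (2 * 3 + 1)!) := by
    have : 0 < x ^ 7 := by positivity
    norm_num [Nat.factorial]
    nlinarith
  have := hasSum_lt (fun n ↦ cosh_term_le_sinh_three_mul_term hx.le n) hterm_lt hcosh hsinh_shift
  linarith

theorem hasDerivAt_coth_sub_inv {x : ℝ} (hx : x ≠ 0) :
    HasDerivAt (fun y ↦ cosh y / sinh y - 1 / y) ((x ^ 2)⁻¹ - (sinh x ^ 2)⁻¹) x := by
  have hcoth := (hasDerivAt_cosh x).div (hasDerivAt_sinh x) (sinh_ne_zero.2 hx)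
  have hinv : HasDerivAt (fun y : ℝ ↦ 1 / y) (-(x ^ 2)⁻¹) x := by
    simpa only [one_div] using hasDerivAt_inv hx
  refine (hcoth.sub hinv).congr_deriv ?_
  have := sinh_ne_zero.2 hx
  field_simp
  linear_combination -x ^ 2 * cosh_sq_sub_sinh_sq x

theorem hasDerivAt_inv_sq_sub_inv_sinh_sq {x : ℝ} (hx : x ≠ 0) :
    HasDerivAt (fun y ↦ (y ^ 2)⁻¹ - (sinh y ^ 2)⁻¹) (2 * cosh x / sinh x ^ 3 - 2 / x ^ 3) x := by
  have hsq := (hasDerivAt_pow 2 x).inv (pow_ne_zero 2 hx)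
  have hsinh_sq := ((hasDerivAt_sinh x).pow 2).inv (pow_ne_zero 2 (sinh_ne_zero.2 hx))
  refine (hsq.sub hsinh_sq).congr_deriv ?_
  simp only [Pi.pow_apply]
  have := sinh_ne_zero.2 hx
  field_simp
  ring

theorem deriv_deriv_coth_sub_inv {x : ℝ} (hx : x ≠ 0) :
    deriv (deriv fun y ↦ cosh y / sinh y - 1 / y) x = 2 * cosh x / sinh x ^ 3 - 2 / x ^ 3 := by
  have hderiv : deriv (fun y ↦ cosh y / sinh y - 1 / y) =ᶠ[𝓝 x]
      fun y ↦ (y ^ 2)⁻¹ - (sinh y ^ 2)⁻¹ :=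
    (eventually_ne_nhds hx).mono fun y hy ↦ (hasDerivAt_coth_sub_inv hy).deriv
  rw [hderiv.deriv_eq, (hasDerivAt_inv_sq_sub_inv_sinh_sq hx).deriv]

/-- The function φ(x) = cosh(x)/sinh(x) − 1/x is strictly concave on (0,∞):
its second derivative is negative for all x > 0. -/
theorem phi_second_deriv_neg :
    ∀ x : ℝ, 0 < x →
      deriv (deriv (fun x : ℝ => Real.cosh x / Real.sinh x - 1 / x)) x < 0 := by
  intro x hx
  rw [deriv_deriv_coth_sub_inv hx.ne', sub_neg,
    div_lt_div_iff₀ (pow_pos (sinh_pos_iff.2 hx) 3) (pow_pos hx 3)]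
  linarith [pow_three_mul_cosh_lt_sinh_pow_three hx]
end

section
/- For all x > 0, sinh(x)³ > x³ · cosh(x). -/
/-!
Both sides vanish at `0`, so it suffices that the derivative
`3 sinh² x cosh x - 3 x² cosh x - x³ sinh x` of their difference is positive for `x > 0`.
With `sinh x ≥ x + x³/6` and `sinh x ≤ x cosh x` it is at least `x⁶ cosh x / 12`.
-/

open Real Set

lemma apply_le_apply_of_hasDerivAt_nonneg {f f' : ℝ → ℝ} {a x : ℝ}
    (hf : ∀ t, HasDerivAt f (f' t) t) (hf' : ∀ t, a < t → 0 ≤ f' t) (hx : a ≤ x) :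
    f a ≤ f x := by
  refine monotoneOn_of_hasDerivWithinAt_nonneg (convex_Ici a)
    (fun t _ ↦ (hf t).continuousAt.continuousWithinAt) (fun t _ ↦ (hf t).hasDerivWithinAt)
    (fun t ht ↦ hf' t ?_) self_mem_Ici hx hx
  rwa [interior_Ici] at ht

lemma apply_lt_apply_of_hasDerivAt_pos {f f' : ℝ → ℝ} {a x : ℝ}
    (hf : ∀ t, HasDerivAt f (f' t) t) (hf' : ∀ t, a < t → 0 < f' t) (hx : a < x) :
    f a < f x := by
  refine strictMonoOn_of_hasDerivWithinAt_pos (convex_Ici a)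
    (fun t _ ↦ (hf t).continuousAt.continuousWithinAt) (fun t _ ↦ (hf t).hasDerivWithinAt)
    (fun t ht ↦ hf' t ?_) self_mem_Ici hx.le hx
  rwa [interior_Ici] at ht

lemma one_add_sq_div_two_le_cosh (x : ℝ) : 1 + x ^ 2 / 2 ≤ cosh x := by
  wlog hx : 0 ≤ x generalizing x
  · simpa using this (-x) (by linarith)
  have hhalf : x / 2 ≤ sinh (x / 2) := self_le_sinh_iff.2 (by linarith)
  have hcosh := cosh_two_mul (x / 2)
  rw [mul_div_cancel₀ x two_ne_zero, cosh_sq] at hcosh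
  nlinarith

lemma self_add_pow_three_div_six_le_sinh {x : ℝ} (hx : 0 ≤ x) : x + x ^ 3 / 6 ≤ sinh x := by
  have h := apply_le_apply_of_hasDerivAt_nonneg
    (f := fun t ↦ sinh t - (t + t ^ 3 / 6)) (f' := fun t ↦ cosh t - (1 + t ^ 2 / 2))
    (fun t ↦ ((hasDerivAt_sinh t).sub ((hasDerivAt_id t).add
      ((hasDerivAt_pow 3 t).div_const 6))).congr_deriv
        (by simp only [Nat.cast_ofNat, Nat.add_one_sub_one]; ring))
    (fun t _ ↦ sub_nonneg.2 (one_add_sq_div_two_le_cosh t)) hx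
  simp only [sinh_zero] at h
  linarith

lemma sinh_le_self_mul_cosh {x : ℝ} (hx : 0 ≤ x) : sinh x ≤ x * cosh x := by
  have h := apply_le_apply_of_hasDerivAt_nonneg
    (f := fun t ↦ t * cosh t - sinh t) (f' := fun t ↦ t * sinh t)
    (fun t ↦ (((hasDerivAt_id t).mul (hasDerivAt_cosh t)).sub
      (hasDerivAt_sinh t)).congr_deriv (by simp))
    (fun t ht ↦ mul_nonneg ht.le (sinh_nonneg_iff.2 ht.le)) hx
  simp only [sinh_zero] at h
  linarith

lemma deriv_sinh_pow_three_sub_pow_three_mul_cosh_pos {x : ℝ} (hx : 0 < x) :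
    0 < 3 * sinh x ^ 2 * cosh x - (3 * x ^ 2 * cosh x + x ^ 3 * sinh x) := by
  have hcosh := cosh_pos x
  have hsinh_sq : (x + x ^ 3 / 6) ^ 2 ≤ sinh x ^ 2 :=
    pow_le_pow_left₀ (by positivity) (self_add_pow_three_div_six_le_sinh hx.le) 2
  have hx_sinh : x ^ 3 * sinh x ≤ x ^ 3 * (x * cosh x) :=
    mul_le_mul_of_nonneg_left (sinh_le_self_mul_cosh hx.le) (by positivity)
  calc 0 < x ^ 6 / 12 * cosh x := by positivity
    _ = 3 * (x + x ^ 3 / 6) ^ 2 * cosh x - (3 * x ^ 2 * cosh x + x ^ 3 * (x * cosh x)) := by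
      ring
    _ ≤ 3 * sinh x ^ 2 * cosh x - (3 * x ^ 2 * cosh x + x ^ 3 * sinh x) := by
      gcongr

/-- For all x > 0, sinh(x)³ > x³ · cosh(x). -/
theorem sinh_cubed_gt :
    ∀ x : ℝ, 0 < x → Real.sinh x ^ 3 > x ^ 3 * Real.cosh x := by
  intro x hx
  have h := apply_lt_apply_of_hasDerivAt_pos
    (f := fun t ↦ sinh t ^ 3 - t ^ 3 * cosh t)
    (f' := fun t ↦ 3 * sinh t ^ 2 * cosh t - (3 * t ^ 2 * cosh t + t ^ 3 * sinh t))
    (fun t ↦ (((hasDerivAt_sinh t).pow 3).sub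
      ((hasDerivAt_pow 3 t).mul (hasDerivAt_cosh t))).congr_deriv (by simp))
    (fun t ht ↦ deriv_sinh_pow_three_sub_pow_three_mul_cosh_pos ht) hx
  simp only [sinh_zero] at h
  linarith
end

section
/- For all x > 0, the function h(x) = sinh(x)³/cosh(x) − x³ satisfies h'''(x) = (2/cosh(x)⁴)·(cosh(x)² − 1)²·(4·cosh(x)² + 3) > 0. -/
/-!
Differentiate three times, using `sinh² = cosh² - 1` after each step to keep everything a rational
function of `cosh` (and `sinh` to the first power). The third derivative is then manifestly
positive as soon as `cosh x > 1`, i.e. `x ≠ 0`.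
-/

open Real

lemma hasDerivAt_sinh_pow_three_div_cosh_sub_pow_three (x : ℝ) :
    HasDerivAt (fun x : ℝ => sinh x ^ 3 / cosh x - x ^ 3)
      (2 * cosh x ^ 2 - 1 - 1 / cosh x ^ 2 - 3 * x ^ 2) x := by
  have hc : cosh x ≠ 0 := (cosh_pos x).ne'
  have h := (((hasDerivAt_sinh x).fun_pow 3).div (hasDerivAt_cosh x) hc).sub (hasDerivAt_pow 3 x)
  refine h.congr_deriv ?_
  field_simp
  push_cast
  linear_combination (sinh x ^ 2 - 2 * cosh x ^ 2 - 1) * cosh_sq x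

lemma hasDerivAt_two_mul_cosh_sq_sub_one_sub_one_div_cosh_sq_sub (x : ℝ) :
    HasDerivAt (fun x : ℝ => 2 * cosh x ^ 2 - 1 - 1 / cosh x ^ 2 - 3 * x ^ 2)
      (4 * cosh x * sinh x + 2 * sinh x / cosh x ^ 3 - 6 * x) x := by
  have hc : cosh x ^ 2 ≠ 0 := pow_ne_zero _ (cosh_pos x).ne'
  have hcosh_sq := (hasDerivAt_cosh x).fun_pow 2
  have h := (((hcosh_sq.const_mul 2).sub_const 1).sub ((hasDerivAt_const x 1).div hcosh_sq hc)).sub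
    ((hasDerivAt_pow 2 x).const_mul 3)
  refine h.congr_deriv ?_
  field_simp
  push_cast
  ring

lemma hasDerivAt_four_mul_cosh_mul_sinh_add_two_mul_sinh_div_cosh_pow_three_sub (x : ℝ) :
    HasDerivAt (fun x : ℝ => 4 * cosh x * sinh x + 2 * sinh x / cosh x ^ 3 - 6 * x)
      (2 / cosh x ^ 4 * (cosh x ^ 2 - 1) ^ 2 * (4 * cosh x ^ 2 + 3)) x := by
  have hc : cosh x ^ 3 ≠ 0 := pow_ne_zero _ (cosh_pos x).ne'
  have h := ((((hasDerivAt_cosh x).const_mul 4).fun_mul (hasDerivAt_sinh x)).add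
    (((hasDerivAt_sinh x).const_mul 2).div ((hasDerivAt_cosh x).fun_pow 3) hc)).sub
    ((hasDerivAt_id x).const_mul 6)
  refine h.congr_deriv ?_
  field_simp
  push_cast
  linear_combination (6 * cosh x ^ 2 - 4 * cosh x ^ 6) * cosh_sq x

lemma iteratedDeriv_three {𝕜 F : Type*} [NontriviallyNormedField 𝕜] [NormedAddCommGroup F]
    [NormedSpace 𝕜 F] (f : 𝕜 → F) : iteratedDeriv 3 f = deriv (deriv (deriv f)) := by
  rw [iteratedDeriv_eq_iterate]
  rfl

lemma third_deriv_pos {x : ℝ} (hx : x ≠ 0) :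
    0 < 2 / cosh x ^ 4 * (cosh x ^ 2 - 1) ^ 2 * (4 * cosh x ^ 2 + 3) := by
  have hcosh : 1 < cosh x := one_lt_cosh.mpr hx
  have hsq : 0 < cosh x ^ 2 - 1 := by nlinarith
  positivity

/-- For h(x) = sinh(x)³/cosh(x) − x³, the third derivative equals
(2/cosh(x)⁴)·(cosh(x)² − 1)²·(4·cosh(x)² + 3), which is positive for x > 0. -/
theorem h_third_deriv :
    ∀ x : ℝ, 0 < x →
      iteratedDeriv 3 (fun x : ℝ => Real.sinh x ^ 3 / Real.cosh x - x ^ 3) x =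
        2 / Real.cosh x ^ 4 * (Real.cosh x ^ 2 - 1) ^ 2 * (4 * Real.cosh x ^ 2 + 3) ∧
      0 < iteratedDeriv 3 (fun x : ℝ => Real.sinh x ^ 3 / Real.cosh x - x ^ 3) x := by
  intro x hx
  have hformula : iteratedDeriv 3 (fun x : ℝ => sinh x ^ 3 / cosh x - x ^ 3) x =
      2 / cosh x ^ 4 * (cosh x ^ 2 - 1) ^ 2 * (4 * cosh x ^ 2 + 3) := by
    rw [iteratedDeriv_three,
      funext fun y => (hasDerivAt_sinh_pow_three_div_cosh_sub_pow_three y).deriv,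
      funext fun y => (hasDerivAt_two_mul_cosh_sq_sub_one_sub_one_div_cosh_sq_sub y).deriv]
    exact (hasDerivAt_four_mul_cosh_mul_sinh_add_two_mul_sinh_div_cosh_pow_three_sub x).deriv
  exact ⟨hformula, hformula ▸ third_deriv_pos hx.ne'⟩
end

section
/- For real numbers a < y < b, the function J(λ) = yλ − log((e^{λb} − e^{λa})/λ) for λ ≠ 0, with J(0) = −log(b − a), is strictly concave on ℝ. -/
/-!
Away from `0`, `(e^{λb} - e^{λa}) / λ = ∫_a^b e^{λs} ds`, and at `0` this integral is `b - a`, so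
`J λ = yλ - log M(λ)` where `M` is the moment generating function of Lebesgue measure on `[a, b]`.
Its logarithm, the cumulant generating function, has second derivative equal to the variance of
the exponentially tilted measure `e^{λs} ds / M(λ)`, which is positive because that measure is not
a point mass. Hence `log M` is strictly convex and `J` strictly concave.
-/

open MeasureTheory Real Set

namespace ProbabilityTheory

variable {Ω : Type*} {m : MeasurableSpace Ω} {X : Ω → ℝ} {μ : Measure Ω} {v : ℝ}

lemma integrable_sub_sq_mul_exp_of_mem_interior_integrableExpSet
    (hv : v ∈ interior (integrableExpSet X μ)) (c : ℝ) :
    Integrable (fun ω ↦ (X ω - c) ^ 2 * exp (v * X ω)) μ := by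
  have h2 := integrable_pow_mul_exp_of_mem_interior_integrableExpSet hv 2
  have h1 := integrable_pow_mul_exp_of_mem_interior_integrableExpSet hv 1
  have h0 := integrable_pow_mul_exp_of_mem_interior_integrableExpSet hv 0
  refine ((h2.sub (h1.const_mul (2 * c))).add (h0.const_mul (c ^ 2))).congr
    (ae_of_all _ fun ω ↦ ?_)
  simp only [Pi.add_apply, Pi.sub_apply]
  ring

lemma iteratedDeriv_two_cgf_pos (hv : v ∈ interior (integrableExpSet X μ))
    (hX : ∀ c, 0 < μ {ω | X ω ≠ c}) : 0 < iteratedDeriv 2 (cgf X μ) v := by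
  have hμ : μ ≠ 0 := fun h ↦ by simpa [h] using hX 0
  rw [iteratedDeriv_two_cgf_eq_integral hv]
  refine div_pos ?_ (mgf_pos' hμ (interior_subset (s := integrableExpSet X μ) hv))
  rw [integral_pos_iff_support_of_nonneg (fun ω ↦ by positivity)
    (integrable_sub_sq_mul_exp_of_mem_interior_integrableExpSet hv _)]
  convert hX (deriv (cgf X μ) v) using 2
  ext ω
  simp [sub_eq_zero, (exp_pos _).ne']

lemma strictConvexOn_cgf (hX : ∀ c, 0 < μ {ω | X ω ≠ c}) :
    StrictConvexOn ℝ (interior (integrableExpSet X μ)) (cgf X μ) := by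
  refine strictConvexOn_of_deriv2_pos' convex_integrableExpSet.interior
    analyticOn_cgf.continuousOn fun v hv ↦ ?_
  rw [← iteratedDeriv_eq_iterate]
  exact iteratedDeriv_two_cgf_pos hv hX

end ProbabilityTheory

open ProbabilityTheory

lemma integral_exp_const_mul {a b c : ℝ} (hc : c ≠ 0) :
    ∫ x in a..b, exp (c * x) = (exp (c * b) - exp (c * a)) / c := by
  rw [intervalIntegral.integral_comp_mul_left exp hc, integral_exp, smul_eq_mul]
  field_simp

lemma integrableExpSet_id_volume_restrict_Ioc (a b : ℝ) :
    integrableExpSet id (volume.restrict (Ioc a b)) = univ :=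
  eq_univ_of_forall fun _ ↦
    ((continuous_const.mul continuous_id).rexp.integrableOn_Icc).mono_set Ioc_subset_Icc_self

lemma volume_restrict_Ioc_setOf_ne_pos {a b : ℝ} (hab : a < b) (c : ℝ) :
    0 < volume.restrict (Ioc a b) {s | id s ≠ c} := by
  rw [Measure.restrict_apply' measurableSet_Ioc,
    show {s | id s ≠ c} ∩ Ioc a b = Ioc a b \ {c} by ext; simp [and_comm],
    measure_sdiff_null (measure_singleton c), Real.volume_Ioc]
  simpa using hab

lemma mgf_id_volume_restrict_Ioc {a b : ℝ} (hab : a ≤ b) (t : ℝ) :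
    mgf id (volume.restrict (Ioc a b)) t = ∫ s in a..b, exp (t * s) :=
  (intervalIntegral.integral_of_le hab).symm

/-- For a < y < b, the function J(λ) = yλ − log((e^{λb} − e^{λa})/λ) (λ ≠ 0),
J(0) = −log(b − a), is strictly concave on ℝ. -/
theorem J_strictConcave (a y b : ℝ) (hay : a < y) (hyb : y < b)
    (J : ℝ → ℝ)
    (hJ : J = fun l : ℝ =>
      if l = 0 then -Real.log (b - a)
      else y * l - Real.log ((Real.exp (l * b) - Real.exp (l * a)) / l)) :
    StrictConcaveOn ℝ Set.univ J := by
  have hab : a < b := hay.trans hyb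
  have hJ_eq : J = fun l ↦ y * l - cgf id (volume.restrict (Ioc a b)) l := by
    subst hJ
    funext l
    rw [cgf, mgf_id_volume_restrict_Ioc hab.le]
    split_ifs with hl
    · simp [hl]
    · rw [integral_exp_const_mul hl]
  have h_cgf := strictConvexOn_cgf (volume_restrict_Ioc_setOf_ne_pos hab)
  rw [integrableExpSet_id_volume_restrict_Ioc, interior_univ] at h_cgf
  rw [hJ_eq]
  exact (LinearMap.concaveOn (LinearMap.mulLeft ℝ y) convex_univ).sub_strictConvexOn h_cgf
end

section
/- Let a < y < b, c = (a+b)/2, d = b − a, and let λ* be the unique maximizer over ℝ of J(λ) = yλ − log((e^{λb} − e^{λa})/λ) (with J(0) = −log(b−a)). Then λ* = (2/d)·φ^{−1}(2(y − c)/d), where φ(x) = cosh(x)/sinh(x) − 1/x extended to ℝ by φ(0) = 0 and φ(−x) = −φ(x); equivalently, if λ* ≠ 0 then φ(λ* d/2) = 2(y − c)/d. -/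
/-!
Writing `c = (a + b) / 2`, `d = b - a` and `u = λ d / 2`, the identity
`e^{λb} - e^{λa} = 2 e^{λc} sinh u` turns `J` into `J(λ) = q u - log d - G(u)`, where
`q = 2 (y - c) / d` and `G(u) = log (sinh u / u)`. The derivative of `G` is the Langevin
function `φ` everywhere, including at `u = 0` because `0 ≤ G(u) ≤ u² / 2`. So at the maximizer
`J'(λ*) = (d / 2) (q - φ(λ* d / 2)) = 0`, and since `φ` is strictly increasing, hence injective,
`φ⁻¹ q = λ* d / 2`.
-/

open Real Set Filter Asymptotics

theorem Function.Odd.strictMono_of_strictMonoOn_Ici {α β : Type*} [AddCommGroup α] [LinearOrder α]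
    [IsOrderedAddMonoid α] [AddCommGroup β] [PartialOrder β] [IsOrderedAddMonoid β] {f : α → β}
    (hf : f.Odd) (h : StrictMonoOn f (Ici 0)) : StrictMono f := by
  refine StrictMonoOn.Iic_union_Ici (fun x hx y hy hxy => ?_) h
  have := h (neg_nonneg.2 hy) (neg_nonneg.2 hx) (neg_lt_neg hxy)
  rwa [hf.eq, hf.eq, neg_lt_neg_iff] at this

namespace Real

theorem sinh_lt_mul_cosh {x : ℝ} (hx : 0 < x) : sinh x < x * cosh x := by
  have hderiv (t : ℝ) : HasDerivAt (fun t => t * cosh t - sinh t) (t * sinh t) t := by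
    refine (((hasDerivAt_id t).mul (hasDerivAt_cosh t)).sub (hasDerivAt_sinh t)).congr_deriv ?_
    simp only [id, one_mul, add_sub_cancel_left]
  have hmono : StrictMonoOn (fun t => t * cosh t - sinh t) (Ici 0) := by
    refine strictMonoOn_of_deriv_pos (convex_Ici 0) (by fun_prop) fun t ht => ?_
    rw [interior_Ici] at ht
    rw [(hderiv t).deriv]
    exact mul_pos ht (sinh_pos_iff.2 ht)
  have := hmono self_mem_Ici hx.le hx
  simp only [zero_mul, sinh_zero, sub_zero] at this
  linarith

theorem one_le_sinh_div_self {x : ℝ} (hx : x ≠ 0) : 1 ≤ sinh x / x := by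
  rcases hx.lt_or_gt with hx | hx
  · rw [le_div_iff_of_neg hx, one_mul]
    exact sinh_le_self_iff.2 hx.le
  · rw [le_div_iff₀ hx, one_mul]
    exact self_le_sinh_iff.2 hx.le

theorem sinh_div_self_le_cosh (x : ℝ) : sinh x / x ≤ cosh x := by
  rcases lt_trichotomy x 0 with hx | rfl | hx
  · have := sinh_lt_mul_cosh (neg_pos.2 hx)
    rw [sinh_neg, cosh_neg] at this
    rw [div_le_iff_of_neg hx]
    linarith
  · simp
  · rw [div_le_iff₀ hx, mul_comm]
    exact (sinh_lt_mul_cosh hx).le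

noncomputable def langevin (x : ℝ) : ℝ :=
  if x = 0 then 0 else cosh x / sinh x - 1 / x

theorem langevin_odd : Function.Odd langevin := fun x => by
  rcases eq_or_ne x 0 with rfl | hx
  · simp [langevin]
  · simp only [langevin, neg_eq_zero, if_neg hx, cosh_neg, sinh_neg, div_neg]
    ring

theorem langevin_pos {x : ℝ} (hx : 0 < x) : 0 < langevin x := by
  rw [langevin, if_neg hx.ne', sub_pos, div_lt_div_iff₀ hx (sinh_pos_iff.2 hx)]
  linarith [sinh_lt_mul_cosh hx]

theorem strictMonoOn_langevin_Ioi : StrictMonoOn langevin (Ioi 0) := by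
  have hderiv {t : ℝ} (ht : 0 < t) :
      HasDerivAt (fun t => cosh t / sinh t - t⁻¹) (1 / t ^ 2 - 1 / sinh t ^ 2) t := by
    refine (((hasDerivAt_cosh t).div (hasDerivAt_sinh t) (sinh_pos_iff.2 ht).ne').sub
      (hasDerivAt_inv ht.ne')).congr_deriv ?_
    have := (sinh_pos_iff.2 ht).ne'
    field_simp
    linear_combination (-t ^ 2) * cosh_sq_sub_sinh_sq t
  have hmono : StrictMonoOn (fun t => cosh t / sinh t - t⁻¹) (Ioi 0) := by
    refine strictMonoOn_of_deriv_pos (convex_Ioi 0) (fun t ht => ?_) fun t ht => ?_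
    · exact (hderiv ht).continuousAt.continuousWithinAt
    rw [interior_Ioi] at ht
    rw [(hderiv ht).deriv, sub_pos]
    have hsinh : t < sinh t := self_lt_sinh_iff.2 ht
    exact one_div_lt_one_div_of_lt (pow_pos ht 2) (pow_lt_pow_left₀ hsinh ht.le two_ne_zero)
  refine hmono.congr fun t ht => ?_
  simp [langevin, (mem_Ioi.1 ht).ne']

theorem strictMono_langevin : StrictMono langevin := by
  refine langevin_odd.strictMono_of_strictMonoOn_Ici ?_
  intro x hx y hy hxy
  rcases (mem_Ici.1 hx).eq_or_lt with rfl | hx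
  · simpa [langevin] using langevin_pos hxy
  · exact strictMonoOn_langevin_Ioi hx (hx.trans hxy) hxy

/-- At `x = 0` the junk value `log (0 / 0) = 0` agrees with the continuous extension `log 1`. -/
noncomputable def logSinhDiv (x : ℝ) : ℝ :=
  log (sinh x / x)

theorem logSinhDiv_nonneg (x : ℝ) : 0 ≤ logSinhDiv x := by
  rcases eq_or_ne x 0 with rfl | hx
  · simp [logSinhDiv]
  · exact log_nonneg (one_le_sinh_div_self hx)

theorem logSinhDiv_le (x : ℝ) : logSinhDiv x ≤ x ^ 2 / 2 := by
  rcases eq_or_ne x 0 with rfl | hx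
  · simp [logSinhDiv]
  calc logSinhDiv x ≤ log (exp (x ^ 2 / 2)) :=
        log_le_log (zero_lt_one.trans_le (one_le_sinh_div_self hx))
          ((sinh_div_self_le_cosh x).trans (cosh_le_exp_half_sq x))
    _ = x ^ 2 / 2 := log_exp _

theorem hasDerivAt_logSinhDiv (x : ℝ) : HasDerivAt logSinhDiv (langevin x) x := by
  rcases eq_or_ne x 0 with rfl | hx
  · rw [hasDerivAt_iff_isLittleO_nhds_zero]
    refine IsBigO.trans_isLittleO (IsBigO.of_bound 1 (Eventually.of_forall fun h => ?_))
      (isLittleO_pow_id one_lt_two)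
    have h0 : logSinhDiv 0 = 0 := by simp [logSinhDiv]
    simp only [zero_add, h0, langevin, if_true, smul_zero, sub_zero, norm_eq_abs, one_mul,
      abs_pow, sq_abs]
    rw [abs_of_nonneg (logSinhDiv_nonneg h)]
    linarith [logSinhDiv_le h, sq_nonneg h]
  · have hpos : 0 < sinh x / x := zero_lt_one.trans_le (one_le_sinh_div_self hx)
    refine (((hasDerivAt_sinh x).div (hasDerivAt_id x) hx).log hpos.ne').congr_deriv ?_
    have hsinh : sinh x ≠ 0 := sinh_ne_zero.2 hx
    simp only [langevin, if_neg hx, Pi.div_apply, id]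
    field_simp

end Real

theorem log_exp_sub_exp_div {a b : ℝ} (hab : a ≠ b) {m : ℝ} (hm : m ≠ 0) :
    log ((exp (m * b) - exp (m * a)) / m)
      = m * ((a + b) / 2) + log (b - a) + logSinhDiv (m * (b - a) / 2) := by
  have hd : b - a ≠ 0 := sub_ne_zero.2 hab.symm
  have hu : m * (b - a) / 2 ≠ 0 := by positivity
  have hsinh : sinh (m * (b - a) / 2) / (m * (b - a) / 2) ≠ 0 :=
    (zero_lt_one.trans_le (one_le_sinh_div_self hu)).ne'
  have hfactor : (exp (m * b) - exp (m * a)) / m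
      = exp (m * ((a + b) / 2)) * ((b - a) * (sinh (m * (b - a) / 2) / (m * (b - a) / 2))) := by
    rw [sinh_eq, show m * b = m * ((a + b) / 2) + m * (b - a) / 2 by ring,
      show m * a = m * ((a + b) / 2) + -(m * (b - a) / 2) by ring, exp_add, exp_add]
    field_simp
  rw [hfactor, log_mul (exp_ne_zero _) (mul_ne_zero hd hsinh), log_exp, log_mul hd hsinh,
    logSinhDiv, add_assoc]

/-- For a < y < b, c = (a+b)/2, d = b − a, the unique maximizer λ* of
J(λ) = yλ − log((e^{λb} − e^{λa})/λ) satisfies λ* = (2/d)·φ⁻¹(2(y − c)/d),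
where φ is the odd extension of x ↦ cosh(x)/sinh(x) − 1/x with φ(0) = 0;
equivalently, if λ* ≠ 0 then φ(λ*·d/2) = 2(y − c)/d. -/
theorem J_maximizer_formula (a y b c d : ℝ) (hay : a < y) (hyb : y < b)
    (hc : c = (a + b) / 2) (hd : d = b - a)
    (φ : ℝ → ℝ)
    (hφ : φ = fun x : ℝ => if x = 0 then 0 else Real.cosh x / Real.sinh x - 1 / x)
    (J : ℝ → ℝ)
    (hJ : J = fun l : ℝ =>
      if l = 0 then -Real.log (b - a)
      else y * l - Real.log ((Real.exp (l * b) - Real.exp (l * a)) / l))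
    (lam : ℝ) (hmax : ∀ m : ℝ, J m ≤ J lam) :
    lam = (2 / d) * Function.invFun φ (2 * (y - c) / d) ∧
    (lam ≠ 0 → φ (lam * d / 2) = 2 * (y - c) / d) := by
  have hab : a ≠ b := (hay.trans hyb).ne
  have hd0 : d ≠ 0 := by rw [hd]; exact sub_ne_zero.2 hab.symm
  set q := 2 * (y - c) / d
  have hJ_eq : J = fun m => q * (m * d / 2) - log d - logSinhDiv (m * d / 2) := by
    funext m
    rcases eq_or_ne m 0 with rfl | hm
    · simp [hJ, hd, logSinhDiv]
    · simp only [hJ, if_neg hm]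
      have hq : q * (m * d / 2) = (y - c) * m := by simp only [q]; field_simp
      rw [log_exp_sub_exp_div hab hm, ← hc, ← hd, hq]
      ring
  have hu : HasDerivAt (fun m => m * d / 2) (d / 2) lam := by
    simpa using ((hasDerivAt_id lam).mul_const d).div_const 2
  have hJ_deriv : HasDerivAt J ((q - langevin (lam * d / 2)) * (d / 2)) lam := by
    rw [hJ_eq, sub_mul]
    exact ((hu.const_mul q).sub_const _).sub ((hasDerivAt_logSinhDiv _).comp lam hu)
  have hcrit : langevin (lam * d / 2) = q := by
    have hzero := IsLocalMax.hasDerivAt_eq_zero (Eventually.of_forall hmax) hJ_deriv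
    exact (sub_eq_zero.1 ((mul_eq_zero.1 hzero).resolve_right (by positivity))).symm
  obtain rfl : φ = langevin := hφ
  refine ⟨?_, fun _ => hcrit⟩
  rw [← hcrit, Function.leftInverse_invFun strictMono_langevin.injective]
  field_simp
end

section
/- Let f: ℝ → [0,∞) be Lipschitz with constant L and bounded below by m > 0 on an interval [t_k, t_{k−1}] with t_k < t_{k−1}. Define q = ∫_{t_k}^{t_{k−1}} f(y) dy, ȳ = (1/q)∫_{t_k}^{t_{k−1}} y f(y) dy, and t̄ = (t_k + t_{k−1})/2. Then |ȳ − t̄| ≤ (L/(6m))·(t_{k−1} − t_k)². -/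
open intervalIntegral

/-!
Writing `c` for the midpoint, `ȳ - c = ∫ (y - c) f(y) dy / q`. Since `∫ (y - c) dy = 0`, the
numerator equals `∫ (y - c) (f(y) - f(c)) dy`, which the Lipschitz bound controls by
`L ∫ (y - c)² dy = L h³ / 12` with `h = t_{k-1} - t_k`, while `q ≥ m h`. This gives the sharper
constant `L / (12 m)`.
-/

open scoped NNReal

theorem integral_sub_midpoint (a b : ℝ) : ∫ y in a..b, (y - (a + b) / 2) = 0 := by
  rw [integral_sub intervalIntegrable_id intervalIntegrable_const, integral_id, integral_const,
    smul_eq_mul]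
  ring

theorem integral_sub_midpoint_sq (a b : ℝ) :
    ∫ y in a..b, (y - (a + b) / 2) ^ 2 = (b - a) ^ 3 / 12 := by
  rw [integral_comp_sub_right (fun x => x ^ 2), integral_pow]
  ring

theorem integral_sub_midpoint_mul_eq {f : ℝ → ℝ} (hf : Continuous f) (a b : ℝ) :
    ∫ y in a..b, (y - (a + b) / 2) * f y =
      ∫ y in a..b, (y - (a + b) / 2) * (f y - f ((a + b) / 2)) := by
  set c := (a + b) / 2
  simp_rw [mul_sub]
  rw [integral_sub ((by fun_prop : Continuous _).intervalIntegrable _ _)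
      ((by fun_prop : Continuous _).intervalIntegrable _ _),
    integral_mul_const, integral_sub_midpoint]
  ring

theorem abs_integral_sub_midpoint_mul_le {f : ℝ → ℝ} {K : ℝ≥0} (hf : LipschitzWith K f)
    {a b : ℝ} (hab : a ≤ b) :
    |∫ y in a..b, (y - (a + b) / 2) * f y| ≤ K * (b - a) ^ 3 / 12 := by
  set c := (a + b) / 2
  have hcont := hf.continuous
  have hpointwise : ∀ y, ‖(y - c) * (f y - f c)‖ ≤ K * (y - c) ^ 2 := fun y => by
    have hLy : |f y - f c| ≤ K * |y - c| := by simpa [Real.dist_eq] using hf.dist_le_mul y c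
    rw [norm_mul, Real.norm_eq_abs, Real.norm_eq_abs, ← sq_abs (y - c)]
    nlinarith [abs_nonneg (y - c)]
  calc |∫ y in a..b, (y - c) * f y|
      = ‖∫ y in a..b, (y - c) * (f y - f c)‖ := by
        rw [integral_sub_midpoint_mul_eq hcont, Real.norm_eq_abs]
    _ ≤ ∫ y in a..b, ‖(y - c) * (f y - f c)‖ := norm_integral_le_integral_norm hab
    _ ≤ ∫ y in a..b, K * (y - c) ^ 2 :=
        integral_mono_on hab ((by fun_prop : Continuous _).intervalIntegrable _ _)
          ((by fun_prop : Continuous _).intervalIntegrable _ _) fun y _ => hpointwise y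
    _ = K * (b - a) ^ 3 / 12 := by rw [integral_const_mul, integral_sub_midpoint_sq]; ring

theorem mul_sub_le_integral_of_le {f : ℝ → ℝ} (hf : Continuous f) {a b m : ℝ} (hab : a ≤ b)
    (hfm : ∀ y ∈ Set.Icc a b, m ≤ f y) : m * (b - a) ≤ ∫ y in a..b, f y := by
  simpa [mul_comm] using
    integral_mono_on hab (intervalIntegrable_const (μ := MeasureTheory.volume))
      (hf.intervalIntegrable a b) hfm

theorem abs_weighted_mean_sub_midpoint_le {f : ℝ → ℝ} {K : ℝ≥0} (hf : LipschitzWith K f)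
    {a b m : ℝ} (hab : a < b) (hm : 0 < m) (hfm : ∀ y ∈ Set.Icc a b, m ≤ f y) :
    |(∫ y in a..b, y * f y) / (∫ y in a..b, f y) - (a + b) / 2| ≤
      K / (12 * m) * (b - a) ^ 2 := by
  set c := (a + b) / 2
  set q := ∫ y in a..b, f y
  have hcont := hf.continuous
  have hq : m * (b - a) ≤ q := mul_sub_le_integral_of_le hcont hab.le hfm
  have hqpos : 0 < q := lt_of_lt_of_le (by nlinarith) hq
  have hnum : (∫ y in a..b, y * f y) - q * c = ∫ y in a..b, (y - c) * f y := by
    simp_rw [sub_mul]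
    rw [mul_comm q, integral_sub ((by fun_prop : Continuous _).intervalIntegrable _ _)
      ((by fun_prop : Continuous _).intervalIntegrable _ _), integral_const_mul]
  have hbound := abs_integral_sub_midpoint_mul_le hf hab.le
  rw [div_sub' hqpos.ne', abs_div, abs_of_pos hqpos, hnum, div_le_iff₀ hqpos]
  calc |∫ y in a..b, (y - c) * f y| ≤ K * (b - a) ^ 3 / 12 := hbound
    _ = K / (12 * m) * (b - a) ^ 2 * (m * (b - a)) := by field_simp
    _ ≤ K / (12 * m) * (b - a) ^ 2 * q := by gcongr

theorem bin_mean_midpoint_bound_general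
    (f : ℝ → ℝ) (L m tk tk1 q ybar : ℝ)
    (hL : 0 < L)
    (hLip : ∀ y₁ y₂ : ℝ, |f y₁ - f y₂| ≤ L * |y₁ - y₂|)
    (hm : 0 < m)
    (hfm : ∀ y ∈ Set.Icc tk tk1, m ≤ f y)
    (ht : tk < tk1)
    (hq : q = ∫ y in tk..tk1, f y)
    (hybar : ybar = (∫ y in tk..tk1, y * f y) / q) :
    |ybar - (tk + tk1) / 2| ≤ L / (6 * m) * (tk1 - tk) ^ 2 := by
  have hf : LipschitzWith L.toNNReal f := .of_dist_le_mul fun x y => by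
    simpa [Real.dist_eq, Real.coe_toNNReal L hL.le] using hLip x y
  have hmean := abs_weighted_mean_sub_midpoint_le hf ht hm hfm
  rw [Real.coe_toNNReal L hL.le] at hmean
  rw [hybar, hq]
  refine hmean.trans (mul_le_mul_of_nonneg_right ?_ (sq_nonneg _))
  gcongr
  norm_num

/-- If f is Lipschitz with constant L and bounded below by m > 0 on [t_k, t_{k−1}],
then the conditional mean ȳ of the bin deviates from the midpoint by at most
(L/(6m))·(t_{k−1} − t_k)². -/
theorem bin_mean_midpoint_bound
    (f : ℝ → ℝ) (L m tk tk1 q ybar : ℝ)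
    (hf0 : ∀ y : ℝ, 0 ≤ f y)
    (hL : 0 < L)
    (hLip : ∀ y₁ y₂ : ℝ, |f y₁ - f y₂| ≤ L * |y₁ - y₂|)
    (hm : 0 < m)
    (hfm : ∀ y ∈ Set.Icc tk tk1, m ≤ f y)
    (ht : tk < tk1)
    (hq : q = ∫ y in tk..tk1, f y)
    (hybar : ybar = (∫ y in tk..tk1, y * f y) / q) :
    |ybar - (tk + tk1) / 2| ≤ L / (6 * m) * (tk1 - tk) ^ 2 :=
  bin_mean_midpoint_bound_general f L m tk tk1 q ybar hL hLip hm hfm ht hq hybar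
end

section
/- For the double Pareto distribution with α > 1, β > 0, M = 1, the Lorenz curve is L(x) = (α−1)(α+β)^{1/β} α^{−1−1/β} x^{1+1/β} for 0 ≤ x ≤ α/(α+β), and L(x) = 1 − (β+1)(α+β)^{−1/α} β^{−1+1/α}(1−x)^{1−1/α} for α/(α+β) ≤ x ≤ 1. -/
/-!
With `c = αβ/(α+β)`, the integrand is `t f(t) = c t^β` on `[0, 1]` and `c t^(-α)` on `[1, ∞)`,
so the partial mean is `c y^(β+1)/(β+1)` below `1` and `c/(β+1) + c (y^(1-α) - 1)/(1-α)`
above. Raising `F y = α/(α+β) y^β` to `1 + 1/β` (resp. `1 - F y = β/(α+β) y^(-α)` to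
`1 - 1/α`) gives the same power of `y`, and the constants of the Lorenz curve cancel the
normalisation of `F` down to `1/(α+β)`.
-/

open MeasureTheory Set Real

noncomputable def doubleParetoDensity (α β : ℝ) (y : ℝ) : ℝ :=
  if y ≤ 1 then α * β / (α + β) * y ^ (β - 1) else α * β / (α + β) * y ^ (-α - 1)

noncomputable def doubleParetoCDF (α β : ℝ) (y : ℝ) : ℝ :=
  if y ≤ 1 then α / (α + β) * y ^ β else 1 - β / (α + β) * y ^ (-α)

lemma Real.self_mul_rpow_sub_one {t p : ℝ} (ht : 0 ≤ t) (hp : p ≠ 0) :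
    t * t ^ (p - 1) = t ^ p := by
  rw [mul_comm, ← rpow_add_one' ht (by simpa using hp), sub_add_cancel]

lemma Real.rpow_sub_one_mul_rpow_neg_mul_rpow {a s x : ℝ} (p : ℝ) (ha : 0 < a) (hs : 0 < s)
    (hx : 0 ≤ x) : s ^ (p - 1) * a ^ (-p) * (a / s * x) ^ p = x ^ p / s := by
  rw [mul_rpow (by positivity) hx, div_rpow ha.le hs.le, rpow_neg ha.le, rpow_sub_one hs.ne']
  have : 0 < a ^ p := rpow_pos_of_pos ha p
  have : 0 < s ^ p := rpow_pos_of_pos hs p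
  field_simp

namespace DoublePareto

variable {α β : ℝ}

lemma mul_density_eqOn_Icc (hβ : 0 < β) :
    EqOn (fun t => t * doubleParetoDensity α β t) (fun t => α * β / (α + β) * t ^ β)
      (Icc 0 1) := by
  rintro t ⟨ht0, ht1⟩
  simp only [doubleParetoDensity, if_pos ht1]
  rw [mul_left_comm, self_mul_rpow_sub_one ht0 hβ.ne']

lemma mul_density_eqOn_Ici (hα : 0 < α) :
    EqOn (fun t => t * doubleParetoDensity α β t) (fun t => α * β / (α + β) * t ^ (-α))
      (Ici 1) := by
  intro t (ht : 1 ≤ t)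
  have key : t * t ^ (-α - 1) = t ^ (-α) := self_mul_rpow_sub_one (by linarith) (by linarith)
  rcases ht.eq_or_lt with rfl | ht
  · simp [doubleParetoDensity]
  · simp only [doubleParetoDensity, if_neg (not_le.2 ht)]
    rw [mul_left_comm, key]

lemma integral_mul_density_of_le_one (hβ : 0 < β) {y : ℝ} (hy0 : 0 ≤ y) (hy1 : y ≤ 1) :
    ∫ t in (0 : ℝ)..y, t * doubleParetoDensity α β t
      = α * β / (α + β) * (y ^ (β + 1) / (β + 1)) := by
  have hsub : uIcc 0 y ⊆ Icc 0 1 := by rw [uIcc_of_le hy0]; exact Icc_subset_Icc_right hy1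
  rw [intervalIntegral.integral_congr ((mul_density_eqOn_Icc hβ).mono hsub),
    intervalIntegral.integral_const_mul,
    integral_rpow (Or.inl (by linarith)), zero_rpow (by positivity), sub_zero]

lemma integral_one_mul_density (hα : 1 < α) {y : ℝ} (hy : 1 ≤ y) :
    ∫ t in (1 : ℝ)..y, t * doubleParetoDensity α β t
      = α * β / (α + β) * ((y ^ (1 - α) - 1) / (1 - α)) := by
  have hsub : uIcc 1 y ⊆ Ici 1 := by rw [uIcc_of_le hy]; exact Icc_subset_Ici_self
  have h0 : (0 : ℝ) ∉ uIcc 1 y := fun h => absurd (hsub h) (by norm_num)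
  rw [intervalIntegral.integral_congr ((mul_density_eqOn_Ici (by linarith)).mono hsub),
    intervalIntegral.integral_const_mul,
    integral_rpow (Or.inr ⟨by linarith, h0⟩), one_rpow, neg_add_eq_sub]

lemma intervalIntegrable_mul_density_zero_one (hβ : 0 < β) :
    IntervalIntegrable (fun t => t * doubleParetoDensity α β t) volume 0 1 :=
  ((intervalIntegral.intervalIntegrable_rpow' (by linarith : (-1 : ℝ) < β)).const_mul _).congr
    ((mul_density_eqOn_Icc hβ).mono (uIoc_subset_uIcc.trans (uIcc_of_le zero_le_one).subset)).symm

lemma intervalIntegrable_one_mul_density (hα : 0 < α) {y : ℝ} (hy : 1 ≤ y) :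
    IntervalIntegrable (fun t => t * doubleParetoDensity α β t) volume 1 y := by
  have hsub : uIcc 1 y ⊆ Ici 1 := by rw [uIcc_of_le hy]; exact Icc_subset_Ici_self
  have h0 : (0 : ℝ) ∉ uIcc 1 y := fun h => absurd (hsub h) (by norm_num)
  exact ((intervalIntegral.intervalIntegrable_rpow (Or.inr h0)).const_mul _).congr
    ((mul_density_eqOn_Ici hα).mono (uIoc_subset_uIcc.trans hsub)).symm

lemma one_sub_cdf_of_one_le (hab : α + β ≠ 0) {y : ℝ} (hy : 1 ≤ y) :
    1 - doubleParetoCDF α β y = β / (α + β) * y ^ (-α) := by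
  rcases hy.eq_or_lt with rfl | hy
  · simp only [doubleParetoCDF, le_refl, if_pos, one_rpow]
    field_simp
    ring
  · simp only [doubleParetoCDF, if_neg (not_le.2 hy)]
    ring

lemma lorenz_lower_constants (hα : 0 < α) (hβ : 0 < β) {y : ℝ} (hy : 0 ≤ y) :
    (α + β) ^ (1 / β) * α ^ (-1 - 1 / β) * (α / (α + β) * y ^ β) ^ (1 + 1 / β)
      = y ^ (β + 1) / (α + β) := by
  have h := rpow_sub_one_mul_rpow_neg_mul_rpow (1 + 1 / β) hα (by linarith : 0 < α + β)
    (rpow_nonneg hy β)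
  have e1 : 1 + 1 / β - 1 = 1 / β := by ring
  have e2 : -(1 + 1 / β) = -1 - 1 / β := by ring
  have e3 : β * (1 + 1 / β) = β + 1 := by field_simp
  rwa [e1, e2, ← rpow_mul hy, e3] at h

lemma lorenz_upper_constants (hα : 0 < α) (hβ : 0 < β) {y : ℝ} (hy : 0 ≤ y) :
    (α + β) ^ (-1 / α) * β ^ (-1 + 1 / α) * (β / (α + β) * y ^ (-α)) ^ (1 - 1 / α)
      = y ^ (1 - α) / (α + β) := by
  have h := rpow_sub_one_mul_rpow_neg_mul_rpow (1 - 1 / α) hβ (by linarith : 0 < α + β)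
    (rpow_nonneg hy (-α))
  have e1 : 1 - 1 / α - 1 = -1 / α := by ring
  have e2 : -(1 - 1 / α) = -1 + 1 / α := by ring
  have e3 : -α * (1 - 1 / α) = 1 - α := by field_simp; ring
  rwa [e1, e2, ← rpow_mul hy, e3] at h

end DoublePareto

open DoublePareto in
/-- Lorenz curve of the double Pareto distribution (α > 1, β > 0, M = 1):
with L(F(y)) = (1/μ)∫₀^y t f(t) dt and μ = αβ/((α−1)(β+1)),
L(x) = (α−1)(α+β)^{1/β} α^{−1−1/β} x^{1+1/β} for x = F(y) ≤ α/(α+β) (y ≤ 1), and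
L(x) = 1 − (β+1)(α+β)^{−1/α} β^{−1+1/α}(1−x)^{1−1/α} for x = F(y) ≥ α/(α+β) (y ≥ 1). -/
theorem doublePareto_lorenz
    (α β μ : ℝ) (hα : 1 < α) (hβ : 0 < β)
    (hμ : μ = α * β / ((α - 1) * (β + 1)))
    (f F : ℝ → ℝ)
    (hf : f = fun y : ℝ =>
      if y ≤ 1 then α * β / (α + β) * y ^ (β - 1)
      else α * β / (α + β) * y ^ (-α - 1))
    (hF : F = fun y : ℝ =>
      if y ≤ 1 then α / (α + β) * y ^ β
      else 1 - β / (α + β) * y ^ (-α)) :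
    (∀ y : ℝ, 0 ≤ y → y ≤ 1 →
      (∫ t in (0:ℝ)..y, t * f t) / μ =
        (α - 1) * (α + β) ^ (1 / β) * α ^ (-1 - 1 / β) * (F y) ^ (1 + 1 / β)) ∧
    (∀ y : ℝ, 1 ≤ y →
      (∫ t in (0:ℝ)..y, t * f t) / μ =
        1 - (β + 1) * (α + β) ^ (-1 / α) * β ^ (-1 + 1 / α) * (1 - F y) ^ (1 - 1 / α)) := by
  obtain rfl : f = doubleParetoDensity α β := hf
  obtain rfl : F = doubleParetoCDF α β := hF
  subst hμ
  have hα0 : 0 < α := by linarith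
  have hab : 0 < α + β := by linarith
  have h1α : 1 - α ≠ 0 := by linarith
  refine ⟨fun y hy0 hy1 => ?_, fun y hy => ?_⟩
  · have hF : doubleParetoCDF α β y = α / (α + β) * y ^ β := if_pos hy1
    rw [integral_mul_density_of_le_one hβ hy0 hy1, hF, mul_assoc, mul_assoc,
      ← mul_assoc _ (α ^ _), lorenz_lower_constants hα0 hβ hy0]
    field_simp
  · rw [← intervalIntegral.integral_add_adjacent_intervals
        (intervalIntegrable_mul_density_zero_one hβ) (intervalIntegrable_one_mul_density hα0 hy),
      integral_mul_density_of_le_one hβ zero_le_one le_rfl, integral_one_mul_density hα hy,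
      one_rpow, one_sub_cdf_of_one_le hab.ne' hy, mul_assoc, mul_assoc,
      ← mul_assoc _ (β ^ _), lorenz_upper_constants hα0 hβ (by linarith)]
    field_simp
    ring
end
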